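/- For a fixed integer m and integers n₁, n₂ with nⱼ ≥ |m| and nⱼ - |m| even, the integral over r from 0 to 1 of Z_{n₁ m}(r) · Z_{n₂ m}(r) · r dr equals δ_{n₁,n₂} / (2n₁ + 2). -/

import Mathlib

open MeasureTheory Real Filter Topology

/-- Bessel function of the first kind of integer order `m`
(via the standard integral representation). -/
noncomputable def besselJ (m : ℤ) (x : ℝ) : ℝ :=
  (1 / (2 * Real.pi)) * ∫ θ in (0:ℝ)..(2 * Real.pi), Real.cos (m * θ - x * Real.sin θ)

/-- Radial Zernike polynomial `Z_{nm}` for `m : ℤ`, `n ≥ |m|`, `n - |m|` even. -/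
noncomputable def Zern (n : ℕ) (m : ℤ) (r : ℝ) : ℝ :=
  ∑ j ∈ Finset.range ((n - m.natAbs) / 2 + 1),
    ((-1 : ℝ) ^ j * (Nat.factorial (n - j) : ℝ) /
      ((Nat.factorial j : ℝ) * (Nat.factorial ((n + m.natAbs) / 2 - j) : ℝ) *
        (Nat.factorial ((n - m.natAbs) / 2 - j) : ℝ))) * r ^ (n - 2 * j)


/-!
Write `n = |m| + 2p` and `(x)_p` for the rising factorial. Reversing the order of summation,
`Z_{n m}(r) = (1/p!) ∑_k (-1)^(p-k) C(p,k) (|m|+k+1)_p r^(|m|+2k)` is a `p`-th forward difference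
in `k`. Its moment against `r^(|m|+2s+1)` is therefore `1/(2 p!)` times the `p`-th forward
difference at `0` of `k ↦ P(k)/(c+k)`, with `P(X) = (X+|m|+1)_p` and `c = |m|+s+1`. Writing
`P(X) = P(-c) + (X+c) Q(X)` with `deg Q < p`, the difference kills `Q`, and
`Δ^p (1/(c+k)) = (-1)^p p! / (c)_{p+1}`; so the moment is `s(s-1)⋯(s-p+1) / (2 (|m|+s+1)_{p+1})`,
which vanishes for `s < p`. Hence `Z_{|m|+2p}` is orthogonal to `Z_{|m|+2q}` for `q < p`, and
against itself only the top coefficient of the second factor contributes, giving `1/(2n+2)`.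
-/

open Finset Polynomial Nat fwdDiff

theorem fwdDiff_iter_comp_addMonoidHom {M M' G : Type*} [AddCommMonoid M] [AddCommMonoid M']
    [AddCommGroup G] (e : M →+ M') (f : M' → G) (h : M) (n : ℕ) (y : M) :
    (Δ_[h])^[n] (f ∘ e) y = (Δ_[e h])^[n] f (e y) := by
  simp [fwdDiff_iter_eq_sum_shift]

theorem Polynomial.fwdDiff_iter_eval_natCast_eq_zero {R : Type*} [CommRing R] {P : R[X]} {n : ℕ}
    (hP : P.natDegree < n) (y : ℕ) : (Δ_[1])^[n] (fun k : ℕ ↦ P.eval (k : R)) y = 0 := by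
  have := fwdDiff_iter_comp_addMonoidHom (Nat.castAddMonoidHom R) P.eval 1 n y
  simp_all [Function.comp_def, fwdDiff_iter_eq_zero_of_degree_lt hP]

section OrderedField

variable {𝕜 : Type*} [Field 𝕜] [LinearOrder 𝕜] [IsStrictOrderedRing 𝕜]

theorem fwdDiff_iter_inv_add_natCast {c : 𝕜} (hc : 0 < c) (n : ℕ) :
    (Δ_[1])^[n] (fun k : ℕ ↦ (c + k)⁻¹)
      = fun k : ℕ ↦ (-1) ^ n * n ! / (ascPochhammer 𝕜 (n + 1)).eval (c + k) := by
  induction n with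
  | zero => simp
  | succ n ih =>
    funext k
    rw [Function.iterate_succ_apply', ih]
    have hx : 0 < c + k := by positivity
    have hA := ascPochhammer_pos (n + 1) (c + k) hx
    have hA' := ascPochhammer_pos (n + 1) (c + k + 1) (by positivity)
    have hleft : (ascPochhammer 𝕜 (n + 2)).eval (c + k)
        = (c + k) * (ascPochhammer 𝕜 (n + 1)).eval (c + k + 1) := by
      rw [ascPochhammer_succ_left]
      simp
    have hright := ascPochhammer_succ_eval (n + 1) (c + k)
    simp only [fwdDiff, Nat.cast_add, Nat.cast_one, ← add_assoc, hleft]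
    rw [hleft] at hright
    rw [Nat.factorial_succ, pow_succ]
    push_cast at hright ⊢
    field_simp
    linear_combination -hright

theorem fwdDiff_iter_eval_div_add_natCast {c : 𝕜} (hc : 0 < c) {P : 𝕜[X]} {n : ℕ}
    (hP : P.natDegree ≤ n) :
    (Δ_[1])^[n] (fun k : ℕ ↦ P.eval (k : 𝕜) / (c + k)) 0
      = P.eval (-c) * ((-1) ^ n * n ! / (ascPochhammer 𝕜 (n + 1)).eval c) := by
  rcases n.eq_zero_or_pos with rfl | hn
  · rw [eq_C_of_natDegree_le_zero hP]
    simp [div_eq_mul_inv]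
  set Q := P /ₘ (X - C (-c)) with hQ
  have hQdeg : Q.natDegree < n := by
    rw [hQ, natDegree_divByMonic P (monic_X_sub_C _), natDegree_X_sub_C]
    omega
  have hsplit : (fun k : ℕ ↦ P.eval (k : 𝕜) / (c + k))
      = P.eval (-c) • (fun k : ℕ ↦ (c + k)⁻¹) + fun k : ℕ ↦ Q.eval (k : 𝕜) := by
    funext k
    have hk : c + k ≠ 0 := by positivity
    conv_lhs => rw [← modByMonic_add_div P (X - C (-c))]
    simp only [modByMonic_X_sub_C_eq_C_eval, eval_add, eval_C, eval_mul, eval_sub, eval_X,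
      Pi.add_apply, Pi.smul_apply, smul_eq_mul, ← hQ]
    field_simp
    ring
  rw [hsplit, fwdDiff_iter_add, fwdDiff_iter_const_smul, fwdDiff_iter_inv_add_natCast hc,
    Pi.add_apply, Pi.smul_apply, Q.fwdDiff_iter_eval_natCast_eq_zero hQdeg]
  simp

end OrderedField

noncomputable def zernikeCoeff (a p k : ℕ) : ℝ :=
  (-1) ^ (p - k) * p.choose k * (a + k + 1).ascFactorial p / p !

theorem Zern_natAbs_add_two_mul_eq_sum (m : ℤ) (p : ℕ) (r : ℝ) :
    Zern (m.natAbs + 2 * p) m r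
      = ∑ k ∈ range (p + 1), zernikeCoeff m.natAbs p k * r ^ (m.natAbs + 2 * k) := by
  set a := m.natAbs
  rw [Zern, show (a + 2 * p - a) / 2 = p by omega, show (a + 2 * p + a) / 2 = a + p by omega,
    ← sum_range_reflect]
  refine sum_congr rfl fun k hk ↦ ?_
  have hkp : k ≤ p := Nat.lt_succ_iff.mp (mem_range.mp hk)
  rw [show a + 2 * p - (p + 1 - 1 - k) = a + p + k by omega,
    show a + p - (p + 1 - 1 - k) = a + k by omega, show p - (p + 1 - 1 - k) = k by omega,
    show a + 2 * p - 2 * (p + 1 - 1 - k) = a + 2 * k by omega, add_tsub_cancel_right]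
  have hasc : ((a + k) ! : ℝ) * (a + k + 1).ascFactorial p = (a + p + k) ! := by
    rw [show a + p + k = a + k + p by ring]
    exact_mod_cast factorial_mul_ascFactorial (a + k) p
  rw [zernikeCoeff, cast_choose ℝ hkp, ← hasc]
  field_simp

@[fun_prop]
theorem continuous_Zern (n : ℕ) (m : ℤ) : Continuous (Zern n m) := by
  unfold Zern
  fun_prop

theorem integral_Zern_mul_pow (m : ℤ) (p s : ℕ) :
    ∫ r in (0 : ℝ)..1, Zern (m.natAbs + 2 * p) m r * r ^ (m.natAbs + 2 * s + 1)
      = s.descFactorial p / (2 * (m.natAbs + s + 1).ascFactorial (p + 1)) := by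
  have hZ := Zern_natAbs_add_two_mul_eq_sum m p
  set a := m.natAbs
  set c : ℝ := a + s + 1 with hc_def
  set P : ℝ[X] := (ascPochhammer ℝ p).comp (X + C ((a : ℝ) + 1))
  have hc : 0 < c := by positivity
  have hPdeg : P.natDegree ≤ p := by
    rw [natDegree_comp, ascPochhammer_natDegree, natDegree_X_add_C, mul_one]
  have hPk (k : ℕ) : P.eval (k : ℝ) = (a + k + 1).ascFactorial p := by
    rw [cast_ascFactorial ℝ]
    simp only [P, eval_comp, eval_add, eval_X, eval_C]
    push_cast
    ring_nf
  have hPc : P.eval (-c) = (-1) ^ p * s.descFactorial p := by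
    simp only [P, eval_comp, eval_add, eval_X, eval_C]
    rw [show -c + (a + 1) = -(s : ℝ) by rw [hc_def]; ring, ascPochhammer_eval_neg_eq_descPochhammer,
      descPochhammer_eval_eq_descFactorial]
  have hterm (k : ℕ) :
      ∫ r in (0 : ℝ)..1, zernikeCoeff a p k * r ^ (a + 2 * k) * r ^ (a + 2 * s + 1)
        = (2 * p ! : ℝ)⁻¹ * (((-1 : ℤ) ^ (p - k) * p.choose k) • (P.eval (k : ℝ) / (c + k))) := by
    simp only [mul_assoc, ← pow_add, intervalIntegral.integral_const_mul, integral_pow, hPk,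
      zernikeCoeff, zsmul_eq_mul]
    rw [one_pow, zero_pow (succ_ne_zero _), sub_zero, hc_def]
    push_cast
    field_simp
    ring
  calc ∫ r in (0 : ℝ)..1, Zern (a + 2 * p) m r * r ^ (a + 2 * s + 1)
      = ∑ k ∈ range (p + 1),
          ∫ r in (0 : ℝ)..1, zernikeCoeff a p k * r ^ (a + 2 * k) * r ^ (a + 2 * s + 1) := by
        simp_rw [hZ, sum_mul]
        exact intervalIntegral.integral_finsetSum fun k _ ↦
          Continuous.intervalIntegrable (by fun_prop) _ _
    _ = (2 * p ! : ℝ)⁻¹ * (Δ_[1])^[p] (fun k : ℕ ↦ P.eval (k : ℝ) / (c + k)) 0 := by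
        simp [hterm, ← mul_sum, fwdDiff_iter_eq_sum_shift]
    _ = s.descFactorial p / (2 * (a + s + 1).ascFactorial (p + 1)) := by
        rw [fwdDiff_iter_eval_div_add_natCast hc hPdeg, hPc, cast_ascFactorial ℝ]
        push_cast
        rw [← hc_def]
        field_simp
        rw [← pow_mul, pow_mul', neg_one_sq, one_pow, one_mul]

theorem integral_Zern_mul_Zern_mul_id_of_le (m : ℤ) {p q : ℕ} (hqp : q ≤ p) :
    ∫ r in (0 : ℝ)..1, Zern (m.natAbs + 2 * p) m r * Zern (m.natAbs + 2 * q) m r * r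
      = if p = q then (2 * (m.natAbs + 2 * p : ℝ) + 2)⁻¹ else 0 := by
  have hZ := Zern_natAbs_add_two_mul_eq_sum m q
  have hmoment (k : ℕ) := integral_Zern_mul_pow m p k
  set a := m.natAbs
  calc ∫ r in (0 : ℝ)..1, Zern (a + 2 * p) m r * Zern (a + 2 * q) m r * r
      = ∑ k ∈ range (q + 1), zernikeCoeff a q k *
          (k.descFactorial p / (2 * (a + k + 1).ascFactorial (p + 1))) := by
        simp_rw [hZ, mul_sum, sum_mul]
        rw [intervalIntegral.integral_finsetSum fun k _ ↦
          Continuous.intervalIntegrable (by fun_prop) _ _]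
        refine sum_congr rfl fun k _ ↦ ?_
        rw [← hmoment, ← intervalIntegral.integral_const_mul]
        congr 1 with r
        ring
    _ = zernikeCoeff a q q * (q.descFactorial p / (2 * (a + q + 1).ascFactorial (p + 1))) := by
        rw [sum_range_succ, sum_eq_zero fun k hk ↦ ?_, zero_add]
        rw [descFactorial_eq_zero_iff_lt.mpr (by grind), cast_zero, zero_div, mul_zero]
    _ = if p = q then (2 * (a + 2 * p : ℝ) + 2)⁻¹ else 0 := by
        split_ifs with hpq
        · subst hpq
          rw [zernikeCoeff, descFactorial_self, ascFactorial_succ]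
          simp only [tsub_self, pow_zero, choose_self, cast_one, mul_one, one_mul, cast_mul,
            cast_add]
          field_simp
          ring
        · rw [descFactorial_eq_zero_iff_lt.mpr (by omega), cast_zero, zero_div, mul_zero]

theorem zernike_orthogonality (m : ℤ) (n₁ n₂ : ℕ)
    (h₁ : m.natAbs ≤ n₁) (h₂ : (n₁ - m.natAbs) % 2 = 0)
    (h₃ : m.natAbs ≤ n₂) (h₄ : (n₂ - m.natAbs) % 2 = 0) :
    ∫ r in (0:ℝ)..1, Zern n₁ m r * Zern n₂ m r * r
      = (if n₁ = n₂ then (1:ℝ) else 0) / (2 * n₁ + 2) := by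
  obtain ⟨p, rfl⟩ : ∃ p, n₁ = m.natAbs + 2 * p := ⟨(n₁ - m.natAbs) / 2, by omega⟩
  obtain ⟨q, rfl⟩ : ∃ q, n₂ = m.natAbs + 2 * q := ⟨(n₂ - m.natAbs) / 2, by omega⟩
  have hclosed : ∫ r in (0 : ℝ)..1, Zern (m.natAbs + 2 * p) m r * Zern (m.natAbs + 2 * q) m r * r
      = if p = q then (2 * (m.natAbs + 2 * p : ℝ) + 2)⁻¹ else 0 := by
    rcases le_total q p with hqp | hpq
    · exact integral_Zern_mul_Zern_mul_id_of_le m hqp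
    · simp_rw [mul_comm (Zern (m.natAbs + 2 * p) m _)]
      rw [integral_Zern_mul_Zern_mul_id_of_le m hpq]
      by_cases h : p = q
      · subst h; rfl
      · simp [h, Ne.symm h]
  rw [hclosed]
  split_ifs <;> first | omega | simp
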